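/- arXiv:2207.08694 — 5 statements merged into one kernel-verified Lean document; each statement's English description precedes it below -/
import Mathlib

section
/- Let N be a parallelizable smooth manifold of dimension n, let {X_1,...,X_n} be a global frame on N with associated teleparallel connection ∇, and let {θ^1,...,θ^n} be an almost dual basis of one-forms for {X_j}. Let G be a Riemannian metric on N, let Y_j be the G-gradient vector field of θ^j, and let ∇* be an affine connection that is G-dual to ∇. Then ∇*_{Y_j} Y_l = 0 for all j,l = 1,...,n; that is, the G-dual connection of ∇ is the teleparallel connection associated with the frame {Y_1,...,Y_n} of gradient vector fields. -/
open scoped Manifold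
local notation "∞" => (⊤ : ℕ∞)

noncomputable section

/-- Smooth vector fields on `N`, realized as derivations of the algebra of smooth
real-valued functions; this is the `C^∞(N)`-module `X(N)`. -/
abbrev VF {E : Type*} [NormedAddCommGroup E] [NormedSpace ℝ E] {H : Type*} [TopologicalSpace H]
    (I : ModelWithCorners ℝ E H) (N : Type*) [TopologicalSpace N] [ChartedSpace H N] :=
  Derivation ℝ C^∞⟮I, N; ℝ⟯ C^∞⟮I, N; ℝ⟯

/-- An affine connection on `N`: a map `∇ : X(N) × X(N) → X(N)` which is ℝ-bilinear,
`C^∞(N)`-linear in the first argument, and satisfies the Leibniz rule in the second. -/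
structure AffineConnection {E : Type*} [NormedAddCommGroup E] [NormedSpace ℝ E]
    {H : Type*} [TopologicalSpace H]
    (I : ModelWithCorners ℝ E H) (N : Type*) [TopologicalSpace N] [ChartedSpace H N] where
  cov : VF I N → VF I N → VF I N
  add_left : ∀ Z Z' W, cov (Z + Z') W = cov Z W + cov Z' W
  add_right : ∀ Z W W', cov Z (W + W') = cov Z W + cov Z W'
  rsmul_left : ∀ (c : ℝ) (Z W : VF I N), cov (c • Z) W = c • cov Z W
  rsmul_right : ∀ (c : ℝ) (Z W : VF I N), cov Z (c • W) = c • cov Z W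
  smul_left : ∀ (f : C^∞⟮I, N; ℝ⟯) (Z W : VF I N), cov (f • Z) W = f • cov Z W
  leibniz : ∀ (Z : VF I N) (f : C^∞⟮I, N; ℝ⟯) (W : VF I N),
    cov Z (f • W) = (Z f) • W + f • cov Z W

/-- A Riemannian metric on `N`: a symmetric, `C^∞(N)`-bilinear, pointwise nonnegative and
definite pairing of vector fields with values in smooth functions. -/
structure RiemannianMetric {E : Type*} [NormedAddCommGroup E] [NormedSpace ℝ E]
    {H : Type*} [TopologicalSpace H]
    (I : ModelWithCorners ℝ E H) (N : Type*) [TopologicalSpace N] [ChartedSpace H N] where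
  g : VF I N → VF I N → C^∞⟮I, N; ℝ⟯
  symm : ∀ Z W, g Z W = g W Z
  add_left : ∀ Z Z' W, g (Z + Z') W = g Z W + g Z' W
  smul_left : ∀ (f : C^∞⟮I, N; ℝ⟯) (Z W : VF I N), g (f • Z) W = f • g Z W
  nonneg : ∀ (Z : VF I N) (x : N), (0 : ℝ) ≤ g Z Z x
  definite : ∀ Z : VF I N, g Z Z = 0 → Z = 0

variable {E : Type*} [NormedAddCommGroup E] [NormedSpace ℝ E]
  {H : Type*} [TopologicalSpace H]

/-!
Since the teleparallel connection `∇` is `C^∞(N)`-linear in its first slot and kills every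
`X_k` along every `X_i`, it kills `X_k` along every vector field, in particular along `Y_j`.
Duality then reduces `G(X_k, ∇*_{Y_j} Y_l)` to `Y_j (G(X_k, Y_l)) = Y_j (θ^l(X_k))`, the
derivative of a constant, hence zero. As the `X_k` form a basis, `∇*_{Y_j} Y_l` is
`G`-orthogonal to every vector field, so it vanishes by definiteness of `G`.
-/

section

variable {I : ModelWithCorners ℝ E H} {N : Type*} [TopologicalSpace N] [ChartedSpace H N]

namespace RiemannianMetric

variable (G : RiemannianMetric I N)

def toLinearMapLeft (W : VF I N) : VF I N →ₗ[C^∞⟮I, N; ℝ⟯] C^∞⟮I, N; ℝ⟯ where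
  toFun Z := G.g Z W
  map_add' Z Z' := G.add_left Z Z' W
  map_smul' f Z := G.smul_left f Z W

@[simp]
theorem g_zero_left (W : VF I N) : G.g 0 W = 0 :=
  (G.toLinearMapLeft W).map_zero

theorem eq_zero_of_forall_g_basis {ι : Type*} (b : Module.Basis ι C^∞⟮I, N; ℝ⟯ (VF I N))
    {V : VF I N} (h : ∀ i, G.g (b i) V = 0) : V = 0 :=
  G.definite V <| LinearMap.congr_fun (b.ext (f₁ := G.toLinearMapLeft V) (f₂ := 0) h) V

end RiemannianMetric

namespace AffineConnection

variable (D : AffineConnection I N)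

def toLinearMapLeft (W : VF I N) : VF I N →ₗ[C^∞⟮I, N; ℝ⟯] VF I N where
  toFun Z := D.cov Z W
  map_add' Z Z' := D.add_left Z Z' W
  map_smul' f Z := D.smul_left f Z W

theorem cov_eq_zero_of_forall_basis {ι : Type*} (b : Module.Basis ι C^∞⟮I, N; ℝ⟯ (VF I N))
    {W : VF I N} (h : ∀ i, D.cov (b i) W = 0) (Z : VF I N) : D.cov Z W = 0 :=
  LinearMap.congr_fun (b.ext (f₁ := D.toLinearMapLeft W) (f₂ := 0) h) Z

def IsDual (G : RiemannianMetric I N) (D D' : AffineConnection I N) : Prop :=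
  ∀ Z W V : VF I N, Z (G.g W V) = G.g (D.cov Z W) V + G.g W (D'.cov Z V)

theorem IsDual.g_cov_eq_zero {G : RiemannianMetric I N} {D D' : AffineConnection I N}
    (hdual : IsDual G D D') {Z W V : VF I N} (hW : D.cov Z W = 0) {c : ℝ}
    (hWV : G.g W V = algebraMap ℝ C^∞⟮I, N; ℝ⟯ c) : G.g W (D'.cov Z V) = 0 := by
  simpa [hW, hWV] using (hdual Z W V).symm

end AffineConnection

end

theorem dual_connection_is_teleparallel_general
    (I : ModelWithCorners ℝ E H) (N : Type*) [TopologicalSpace N] [ChartedSpace H N]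
    (n : ℕ)
    (X : Module.Basis (Fin n) C^∞⟮I, N; ℝ⟯ (VF I N))
    (D : AffineConnection I N)
    (hD : ∀ j k : Fin n, D.cov (X j) (X k) = 0)
    (θ : Module.Basis (Fin n) C^∞⟮I, N; ℝ⟯ (VF I N →ₗ[C^∞⟮I, N; ℝ⟯] C^∞⟮I, N; ℝ⟯))
    (Cmat : Fin n → Fin n → ℝ)
    (hθ : ∀ j k : Fin n, θ j (X k) = algebraMap ℝ C^∞⟮I, N; ℝ⟯ (Cmat j k))
    (G : RiemannianMetric I N)
    (Y : Fin n → VF I N)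
    (hY : ∀ (k : Fin n) (Z : VF I N), θ k Z = G.g (Y k) Z)
    (D' : AffineConnection I N)
    (hdual : ∀ Z W V : VF I N,
      Z (G.g W V) = G.g (D.cov Z W) V + G.g W (D'.cov Z V)) :
    ∀ j l : Fin n, D'.cov (Y j) (Y l) = 0 := by
  intro j l
  have hXY : ∀ k, G.g (X k) (Y l) = algebraMap ℝ C^∞⟮I, N; ℝ⟯ (Cmat l k) := fun k => by
    rw [G.symm, ← hY l (X k), hθ l k]
  have hDX : ∀ k, D.cov (Y j) (X k) = 0 := fun k =>
    D.cov_eq_zero_of_forall_basis X (fun i => hD i k) (Y j)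
  exact G.eq_zero_of_forall_g_basis X fun k =>
    AffineConnection.IsDual.g_cov_eq_zero hdual (hDX k) (hXY k)

/-- The `G`-dual connection `∇*` of the teleparallel connection `∇` of a global frame `{X_j}`
satisfies `∇*_{Y_j} Y_l = 0` for the `G`-gradient vector fields `Y_j` of an almost dual basis
of one-forms: i.e. `∇*` is the teleparallel connection of the gradient frame `{Y_j}`. -/
theorem dual_connection_is_teleparallel
    (I : ModelWithCorners ℝ E H) (N : Type*) [TopologicalSpace N] [ChartedSpace H N]
    [IsManifold I ∞ N] [FiniteDimensional ℝ E] (n : ℕ)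
    (hdim : Module.finrank ℝ E = n)
    (X : Module.Basis (Fin n) C^∞⟮I, N; ℝ⟯ (VF I N))
    (D : AffineConnection I N)
    (hD : ∀ j k : Fin n, D.cov (X j) (X k) = 0)
    (θ : Module.Basis (Fin n) C^∞⟮I, N; ℝ⟯ (VF I N →ₗ[C^∞⟮I, N; ℝ⟯] C^∞⟮I, N; ℝ⟯))
    (Cmat : Fin n → Fin n → ℝ)
    (hθ : ∀ j k : Fin n, θ j (X k) = algebraMap ℝ C^∞⟮I, N; ℝ⟯ (Cmat j k))
    (G : RiemannianMetric I N)
    (Y : Fin n → VF I N)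
    (hY : ∀ (k : Fin n) (Z : VF I N), θ k Z = G.g (Y k) Z)
    (D' : AffineConnection I N)
    (hdual : ∀ Z W V : VF I N,
      Z (G.g W V) = G.g (D.cov Z W) V + G.g W (D'.cov Z V)) :
    ∀ j l : Fin n, D'.cov (Y j) (Y l) = 0 :=
  dual_connection_is_teleparallel_general I N n X D hD θ Cmat hθ G Y hY D' hdual
end
end

section
/- Let p ∈ Δ_n and w ∈ ℝ^n, and define the curve p_w : ℝ → ℝ^n by p_w(t)^k := e^{t w^k} p^k / (Σ_{j=1}^n e^{t w^j} p^j). Then p_w(t) ∈ Δ_n for every t ∈ ℝ, p_w(0) = p, and p_w is differentiable with (d/dt) p_w(t)^k = (w^k − Σ_{j=1}^n w^j p_w(t)^j) · p_w(t)^k for all t ∈ ℝ and all k = 1,...,n. In particular, the geodesics of the exponential connection on Δ_n are defined for all times, so the exponential connection is complete. -/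
open scoped BigOperators

/-- The interior of the n-simplex: strictly positive probability vectors. -/
def simplexInterior (n : ℕ) : Set (Fin n → ℝ) :=
  {p | (∀ i, 0 < p i) ∧ ∑ i, p i = 1}

/-- The exponential geodesic `p_w(t)^k = e^{t w^k} p^k / Σ_j e^{t w^j} p^j`. -/
noncomputable def expGeodesic {n : ℕ} (p w : Fin n → ℝ) (t : ℝ) : Fin n → ℝ :=
  fun k => Real.exp (t * w k) * p k / ∑ j, Real.exp (t * w j) * p j

/-!
The curve is `t ↦ e^{t w} p` normalised by the partition function `Z(t) = Σ_j e^{t w^j} p^j`.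
For `p` in the open simplex, `Z(t)` is a sum of positive terms, so the curve is defined for every
`t` and has positive entries summing to `1`. Since `Z' = Σ_j w^j e^{t w^j} p^j`, the quotient rule
gives `p_w' = (w^k - Z'/Z) p_w^k`, and `Z'/Z` is the `p_w(t)`-mean of `w`.
-/

open Finset Real

lemma hasDerivAt_exp_mul_const_mul_const (c a t : ℝ) :
    HasDerivAt (fun s => exp (s * c) * a) (c * (exp (t * c) * a)) t := by
  refine (((hasDerivAt_mul_const (x := t) c).exp).mul_const a).congr_deriv ?_
  ring

namespace expGeodesic

variable {n : ℕ} (p w : Fin n → ℝ)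

noncomputable def partition (t : ℝ) : ℝ :=
  ∑ j, exp (t * w j) * p j

lemma apply_eq (t : ℝ) (k : Fin n) :
    expGeodesic p w t k = exp (t * w k) * p k / partition p w t :=
  rfl

lemma hasDerivAt_partition (t : ℝ) :
    HasDerivAt (partition p w) (∑ j, w j * (exp (t * w j) * p j)) t :=
  HasDerivAt.fun_sum fun j _ => hasDerivAt_exp_mul_const_mul_const (w j) (p j) t

lemma partition_pos (hp : p ∈ simplexInterior n) (t : ℝ) : 0 < partition p w t := by
  obtain ⟨hpos, hsum⟩ := hp
  have hne : (univ : Finset (Fin n)).Nonempty :=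
    nonempty_of_sum_ne_zero (hsum.symm ▸ one_ne_zero)
  exact sum_pos (fun j _ => mul_pos (exp_pos _) (hpos j)) hne

lemma sum_mul_apply (f : Fin n → ℝ) (t : ℝ) :
    ∑ j, f j * expGeodesic p w t j = (∑ j, f j * (exp (t * w j) * p j)) / partition p w t := by
  simp only [apply_eq, mul_div_assoc, sum_div]

lemma sum_apply {t : ℝ} (hZ : partition p w t ≠ 0) : ∑ j, expGeodesic p w t j = 1 := by
  simp only [apply_eq, ← sum_div]
  exact div_self hZ

lemma mem_simplexInterior (hp : p ∈ simplexInterior n) (t : ℝ) :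
    expGeodesic p w t ∈ simplexInterior n :=
  ⟨fun k => div_pos (mul_pos (exp_pos _) (hp.1 k)) (partition_pos p w hp t),
    sum_apply p w (partition_pos p w hp t).ne'⟩

lemma zero (hp : ∑ j, p j = 1) : expGeodesic p w 0 = p := by
  funext k
  simp [apply_eq, partition, hp]

lemma hasDerivAt {t : ℝ} (hZ : partition p w t ≠ 0) (k : Fin n) :
    HasDerivAt (fun s => expGeodesic p w s k)
      ((w k - ∑ j, w j * expGeodesic p w t j) * expGeodesic p w t k) t := by
  have h := (hasDerivAt_exp_mul_const_mul_const (w k) (p k) t).div (hasDerivAt_partition p w t) hZ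
  refine h.congr_deriv ?_
  rw [sum_mul_apply, apply_eq]
  field_simp

end expGeodesic

/-- The geodesics of the exponential connection on the interior of the n-simplex stay in the
simplex for all times, start at `p`, and satisfy the gradient-flow ODE
`(d/dt) p_w(t)^k = (w^k − Σ_j w^j p_w(t)^j) p_w(t)^k`; in particular they are defined for all
times, so the exponential connection is complete. -/
theorem expGeodesic_complete {n : ℕ} (p : Fin n → ℝ) (hp : p ∈ simplexInterior n)
    (w : Fin n → ℝ) :
    (∀ t : ℝ, expGeodesic p w t ∈ simplexInterior n) ∧
    expGeodesic p w 0 = p ∧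
    (∀ (t : ℝ) (k : Fin n),
      HasDerivAt (fun s => expGeodesic p w s k)
        ((w k - ∑ j, w j * expGeodesic p w t j) * expGeodesic p w t k) t) :=
  ⟨expGeodesic.mem_simplexInterior p w hp, expGeodesic.zero p w hp.2,
    fun t => expGeodesic.hasDerivAt p w (expGeodesic.partition_pos p w hp t).ne'⟩
end

section
/- Let H and V be n×n complex Hermitian matrices. For every t ∈ ℝ, Tr(exp(H + tV)) is a positive real number and the matrix ρ(t) := exp(H + tV) / Tr(exp(H + tV)) is Hermitian, positive definite, and has trace 1. In particular, the curve t ↦ ρ(t) lies in the set of faithful density matrices for all t ∈ ℝ, so the geodesics of the quantum exponential connection (the connection dual to the mixture connection with respect to the Bogoliubov–Kubo–Mori metric) are complete. -/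
open scoped ComplexOrder
open Matrix

/-- `exp A = exp (A/2)ᴴ * exp (A/2)` is a Gram matrix of an invertible matrix. -/
theorem Matrix.IsHermitian.posDef_exp {m 𝕜 : Type*} [Fintype m] [DecidableEq m] [RCLike 𝕜]
    {A : Matrix m m 𝕜} (hA : A.IsHermitian) : (NormedSpace.exp A).PosDef := by
  set B := NormedSpace.exp ((2⁻¹ : ℝ) • A)
  have hGram : Bᴴ * B = NormedSpace.exp A := by
    rw [(hA.smul (IsSelfAdjoint.all (2⁻¹ : ℝ))).exp,
      ← exp_add_of_commute _ _ (Commute.refl _), ← add_smul]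
    norm_num
  exact hGram ▸ PosDef.conjTranspose_mul_self B (mulVec_injective_iff_isUnit.mpr (isUnit_exp _))

/-- For Hermitian matrices `H` and `V`, `Tr(exp(H + tV))` is a positive real number and
`ρ(t) = exp(H + tV) / Tr(exp(H + tV))` is a faithful density matrix (Hermitian, positive
definite, of trace one) for every `t ∈ ℝ`: the geodesics of the quantum exponential
connection are complete. -/
theorem bkm_exponential_geodesic_complete {n : ℕ} (hn : 1 ≤ n)
    (Hm V : Matrix (Fin n) (Fin n) ℂ) (hH : Hm.IsHermitian) (hV : V.IsHermitian) (t : ℝ) :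
    0 < (NormedSpace.exp (Hm + (t : ℂ) • V)).trace ∧
    ((NormedSpace.exp (Hm + (t : ℂ) • V)).trace⁻¹ •
        NormedSpace.exp (Hm + (t : ℂ) • V)).IsHermitian ∧
    ((NormedSpace.exp (Hm + (t : ℂ) • V)).trace⁻¹ •
        NormedSpace.exp (Hm + (t : ℂ) • V)).PosDef ∧
    ((NormedSpace.exp (Hm + (t : ℂ) • V)).trace⁻¹ •
        NormedSpace.exp (Hm + (t : ℂ) • V)).trace = 1 := by
  have : Nonempty (Fin n) := ⟨⟨0, hn⟩⟩
  have hExp := (hH.add (hV.smul (Complex.conj_ofReal t))).posDef_exp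
  have hTrace := hExp.trace_pos
  have hρ := hExp.smul (inv_pos.mpr hTrace)
  refine ⟨hTrace, hρ.isHermitian, hρ, ?_⟩
  rw [trace_smul, smul_eq_mul, inv_mul_cancel₀ hTrace.ne']
end

section
/- Let ρ be an n×n complex Hermitian positive-definite matrix with Tr(ρ) = 1, let V be an n×n Hermitian matrix, and let κ > 0. For every t ∈ ℝ, the matrix exp(tV) ρ^{√κ} exp(tV) is Hermitian positive definite, hence its real power A(t) := (exp(tV) ρ^{√κ} exp(tV))^{1/√κ} is Hermitian positive definite with Tr(A(t)) > 0, and ρ(t) := A(t) / Tr(A(t)) is a faithful density matrix for every t ∈ ℝ. In particular the geodesics of the deformed-Bures dual connection are defined for all times, so this connection is complete. -/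
/-! The proof is conjugation and normalization: `ρ^{√κ}` is positive definite because its
eigenvalues are, conjugating it by the invertible Hermitian matrix `exp(tV)` keeps it positive
definite, so its real power is positive definite again and has positive trace, and dividing by
that trace gives a faithful density matrix. -/

open scoped ComplexOrder
open Matrix

/-- The real power `A^r` of a Hermitian matrix, defined through the spectral decomposition by
raising each eigenvalue to the power `r` (junk value `A` if `A` is not Hermitian). -/
noncomputable def hermPow {n : ℕ} (A : Matrix (Fin n) (Fin n) ℂ) (r : ℝ) :
    Matrix (Fin n) (Fin n) ℂ :=
  if hA : A.IsHermitian then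
    (hA.eigenvectorUnitary : Matrix (Fin n) (Fin n) ℂ) *
      Matrix.diagonal (fun i => ((hA.eigenvalues i ^ r : ℝ) : ℂ)) *
      (star (hA.eigenvectorUnitary : Matrix (Fin n) (Fin n) ℂ))
  else A

namespace Matrix

variable {ι 𝕜 : Type*} [Fintype ι] [RCLike 𝕜]

theorem PosDef.inv_trace_smul [Nonempty ι] {A : Matrix ι ι 𝕜} (hA : A.PosDef) :
    (A.trace⁻¹ • A).PosDef :=
  hA.smul (inv_pos.2 hA.trace_pos)

theorem trace_inv_trace_smul {K : Type*} [Field K] {A : Matrix ι ι K} (hA : A.trace ≠ 0) :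
    (A.trace⁻¹ • A).trace = 1 := by
  rw [trace_smul, smul_eq_mul, inv_mul_cancel₀ hA]

variable [DecidableEq ι]

theorem IsHermitian.exp_ofReal_smul {V : Matrix ι ι 𝕜} (hV : V.IsHermitian) (t : ℝ) :
    (NormedSpace.exp ((t : 𝕜) • V)).IsHermitian :=
  (hV.smul (RCLike.conj_ofReal t)).exp

theorem PosDef.mul_mul_of_isHermitian_of_isUnit {R : Type*} [CommRing R] [PartialOrder R]
    [StarRing R] {A E : Matrix ι ι R} (hA : A.PosDef)
    (hE : E.IsHermitian) (hEu : IsUnit E) : (E * A * E).PosDef := by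
  simpa only [star_eq_conjTranspose, hE.eq] using hEu.posDef_star_right_conjugate_iff.2 hA

end Matrix

theorem hermPow_posDef {n : ℕ} {A : Matrix (Fin n) (Fin n) ℂ} (hA : A.PosDef) (r : ℝ) :
    (hermPow A r).PosDef := by
  rw [hermPow, dif_pos hA.isHermitian]
  refine (Unitary.toUnits hA.isHermitian.eigenvectorUnitary).isUnit
    |>.posDef_star_right_conjugate_iff.2 (posDef_diagonal_iff.2 fun i => ?_)
  exact_mod_cast Real.rpow_pos_of_pos (hA.eigenvalues_pos i) r

theorem deformed_bures_geodesic_complete_general {n : ℕ} (hn : 1 ≤ n)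
    (ρ : Matrix (Fin n) (Fin n) ℂ) (hρ : ρ.PosDef)
    (V : Matrix (Fin n) (Fin n) ℂ) (hV : V.IsHermitian) (κ : ℝ) (t : ℝ) :
    (NormedSpace.exp ((t : ℂ) • V) * hermPow ρ (Real.sqrt κ) *
        NormedSpace.exp ((t : ℂ) • V)).IsHermitian ∧
    (NormedSpace.exp ((t : ℂ) • V) * hermPow ρ (Real.sqrt κ) *
        NormedSpace.exp ((t : ℂ) • V)).PosDef ∧
    (hermPow (NormedSpace.exp ((t : ℂ) • V) * hermPow ρ (Real.sqrt κ) *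
        NormedSpace.exp ((t : ℂ) • V)) (1 / Real.sqrt κ)).IsHermitian ∧
    (hermPow (NormedSpace.exp ((t : ℂ) • V) * hermPow ρ (Real.sqrt κ) *
        NormedSpace.exp ((t : ℂ) • V)) (1 / Real.sqrt κ)).PosDef ∧
    0 < (hermPow (NormedSpace.exp ((t : ℂ) • V) * hermPow ρ (Real.sqrt κ) *
        NormedSpace.exp ((t : ℂ) • V)) (1 / Real.sqrt κ)).trace ∧
    ((hermPow (NormedSpace.exp ((t : ℂ) • V) * hermPow ρ (Real.sqrt κ) *
        NormedSpace.exp ((t : ℂ) • V)) (1 / Real.sqrt κ)).trace⁻¹ •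
      hermPow (NormedSpace.exp ((t : ℂ) • V) * hermPow ρ (Real.sqrt κ) *
        NormedSpace.exp ((t : ℂ) • V)) (1 / Real.sqrt κ)).PosDef ∧
    ((hermPow (NormedSpace.exp ((t : ℂ) • V) * hermPow ρ (Real.sqrt κ) *
        NormedSpace.exp ((t : ℂ) • V)) (1 / Real.sqrt κ)).trace⁻¹ •
      hermPow (NormedSpace.exp ((t : ℂ) • V) * hermPow ρ (Real.sqrt κ) *
        NormedSpace.exp ((t : ℂ) • V)) (1 / Real.sqrt κ)).trace = 1 := by
  have : Nonempty (Fin n) := ⟨⟨0, hn⟩⟩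
  have hconj : (NormedSpace.exp ((t : ℂ) • V) * hermPow ρ (Real.sqrt κ) *
      NormedSpace.exp ((t : ℂ) • V)).PosDef :=
    (hermPow_posDef hρ _).mul_mul_of_isHermitian_of_isUnit (hV.exp_ofReal_smul t) (isUnit_exp _)
  have hpow := hermPow_posDef hconj (1 / Real.sqrt κ)
  exact ⟨hconj.isHermitian, hconj, hpow.isHermitian, hpow, hpow.trace_pos, hpow.inv_trace_smul,
    trace_inv_trace_smul hpow.trace_pos.ne'⟩

/-- For a faithful density matrix `ρ`, a Hermitian `V` and `κ > 0`, the matrix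
`exp(tV) ρ^{√κ} exp(tV)` is Hermitian positive definite, its real power
`A(t) = (exp(tV) ρ^{√κ} exp(tV))^{1/√κ}` is Hermitian positive definite with positive trace,
and `ρ(t) = A(t)/Tr(A(t))` is a faithful density matrix for every `t ∈ ℝ`: the geodesics of
the deformed-Bures dual connection are complete. -/
theorem deformed_bures_geodesic_complete {n : ℕ} (hn : 1 ≤ n)
    (ρ : Matrix (Fin n) (Fin n) ℂ) (hρ : ρ.PosDef) (hρtr : ρ.trace = 1)
    (V : Matrix (Fin n) (Fin n) ℂ) (hV : V.IsHermitian) (κ : ℝ) (hκ : 0 < κ) (t : ℝ) :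
    (NormedSpace.exp ((t : ℂ) • V) * hermPow ρ (Real.sqrt κ) *
        NormedSpace.exp ((t : ℂ) • V)).IsHermitian ∧
    (NormedSpace.exp ((t : ℂ) • V) * hermPow ρ (Real.sqrt κ) *
        NormedSpace.exp ((t : ℂ) • V)).PosDef ∧
    (hermPow (NormedSpace.exp ((t : ℂ) • V) * hermPow ρ (Real.sqrt κ) *
        NormedSpace.exp ((t : ℂ) • V)) (1 / Real.sqrt κ)).IsHermitian ∧
    (hermPow (NormedSpace.exp ((t : ℂ) • V) * hermPow ρ (Real.sqrt κ) *
        NormedSpace.exp ((t : ℂ) • V)) (1 / Real.sqrt κ)).PosDef ∧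
    0 < (hermPow (NormedSpace.exp ((t : ℂ) • V) * hermPow ρ (Real.sqrt κ) *
        NormedSpace.exp ((t : ℂ) • V)) (1 / Real.sqrt κ)).trace ∧
    ((hermPow (NormedSpace.exp ((t : ℂ) • V) * hermPow ρ (Real.sqrt κ) *
        NormedSpace.exp ((t : ℂ) • V)) (1 / Real.sqrt κ)).trace⁻¹ •
      hermPow (NormedSpace.exp ((t : ℂ) • V) * hermPow ρ (Real.sqrt κ) *
        NormedSpace.exp ((t : ℂ) • V)) (1 / Real.sqrt κ)).PosDef ∧
    ((hermPow (NormedSpace.exp ((t : ℂ) • V) * hermPow ρ (Real.sqrt κ) *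
        NormedSpace.exp ((t : ℂ) • V)) (1 / Real.sqrt κ)).trace⁻¹ •
      hermPow (NormedSpace.exp ((t : ℂ) • V) * hermPow ρ (Real.sqrt κ) *
        NormedSpace.exp ((t : ℂ) • V)) (1 / Real.sqrt κ)).trace = 1 :=
  deformed_bures_geodesic_complete_general hn ρ hρ V hV κ t
end

section
/- Let p_1,...,p_n > 0 with Σ_j p_j = 1 and let ρ = diag(p_1,...,p_n). Let f : (0,∞) → (0,∞) satisfy f(1) = 1 and f(x) = x f(1/x) for all x > 0. Define the linear maps K^f_ρ and T^f_ρ on n×n complex matrices by (K^f_ρ(A))_{jk} := p_k f(p_j/p_k) A_{jk} and (T^f_ρ(A))_{jk} := A_{jk} / (p_k f(p_j/p_k)). Let ω be an n×n Hermitian matrix with Tr(ω) = 0, and set Y := K^f_ρ(ω) − Tr(K^f_ρ(ω)) · ρ. Then Y is Hermitian, Tr(Y) = 0, and for every Hermitian matrix a with Tr(a) = 0 one has Tr(a · T^f_ρ(Y)) = Tr(a ω). That is, Y is the G_f-gradient at ρ of the expectation-value function ρ ↦ Tr(ρ ω). -/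
/-!
At a diagonal state, `K^f_ρ` and `T^f_ρ` are Hadamard multiplication and division by the real
matrix `c_jk = p_k f(p_j/p_k)`, which is symmetric because `f(x) = x f(1/x)` and has diagonal `p`
because `f(1) = 1`. Hence `K^f_ρ(ω)` is Hermitian with real trace `t`, `Tr Y = t (1 - Tr ρ) = 0`,
and `T^f_ρ(Y) = ω - t • 1`, so `Tr(a T^f_ρ(Y)) = Tr(a ω) - t Tr a = Tr(a ω)`.
-/

namespace Matrix

variable {ι : Type*}

lemma IsHermitian.isSelfAdjoint_trace [Fintype ι] {α : Type*} [AddCommMonoid α]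
    [StarAddMonoid α] {A : Matrix ι ι α} (hA : A.IsHermitian) : IsSelfAdjoint A.trace := by
  rw [IsSelfAdjoint, ← trace_conjTranspose, hA.eq]

lemma IsHermitian.sub_trace_smul [Fintype ι] {α : Type*} [CommRing α] [StarRing α]
    {B D : Matrix ι ι α} (hB : B.IsHermitian) (hD : D.IsHermitian) :
    (B - B.trace • D).IsHermitian :=
  hB.sub (hD.smul hB.isSelfAdjoint_trace)

lemma trace_sub_trace_smul_eq_zero [Fintype ι] {α : Type*} [CommRing α] {B D : Matrix ι ι α}
    (hD : D.trace = 1) : (B - B.trace • D).trace = 0 := by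
  rw [trace_sub, trace_smul, hD, smul_eq_mul, mul_one, sub_self]

lemma trace_mul_sub_smul_one [Fintype ι] [DecidableEq ι] {α : Type*} [CommRing α]
    {a B : Matrix ι ι α} (t : α) (ha : a.trace = 0) :
    (a * (B - t • 1)).trace = (a * B).trace := by
  rw [Matrix.mul_sub, trace_sub, Matrix.mul_smul, Matrix.mul_one, trace_smul, ha, smul_zero,
    sub_zero]

lemma hadamard_sub_smul_diagonal_diag_apply_div [DecidableEq ι] {K : Type*} [Field K]
    {W : Matrix ι ι K} (hW : ∀ j k, W j k ≠ 0) (A : Matrix ι ι K) (t : K) (j k : ι) :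
    (W ⊙ A - t • diagonal W.diag) j k / W j k = (A - t • 1) j k := by
  rcases eq_or_ne j k with rfl | hjk
  · simp [sub_div, hW]
  · simp [hjk, hW]

end Matrix

open Matrix

section PetzWeight

variable {ι : Type*} (p : ι → ℝ) (f : ℝ → ℝ)

noncomputable def petzWeight : Matrix ι ι ℝ := of fun j k => p k * f (p j / p k)

@[simp]
lemma petzWeight_apply (j k : ι) : petzWeight p f j k = p k * f (p j / p k) := rfl

variable {p f}

lemma petzWeight_apply_self (hf1 : f 1 = 1) {j : ι} (hj : p j ≠ 0) :
    petzWeight p f j j = p j := by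
  rw [petzWeight_apply, div_self hj, hf1, mul_one]

lemma petzWeight_ne_zero (hp : ∀ j, 0 < p j) (hfpos : ∀ x : ℝ, 0 < x → 0 < f x) (j k : ι) :
    petzWeight p f j k ≠ 0 :=
  (mul_pos (hp k) (hfpos _ (div_pos (hp j) (hp k)))).ne'

lemma petzWeight_isSymm (hp : ∀ j, 0 < p j) (hfsymm : ∀ x : ℝ, 0 < x → f x = x * f x⁻¹) :
    (petzWeight p f).IsSymm := by
  refine IsSymm.ext fun j k => ?_
  rw [petzWeight_apply, petzWeight_apply, hfsymm _ (div_pos (hp k) (hp j)), inv_div]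
  field_simp [(hp j).ne', (hp k).ne']

end PetzWeight

theorem gf_gradient_of_expectation_function_general {n : ℕ}
    (p : Fin n → ℝ) (hp : ∀ j, 0 < p j) (hpsum : ∑ j, p j = 1)
    (f : ℝ → ℝ) (hfpos : ∀ x : ℝ, 0 < x → 0 < f x) (hf1 : f 1 = 1)
    (hfsymm : ∀ x : ℝ, 0 < x → f x = x * f x⁻¹)
    (Kf Tf : Matrix (Fin n) (Fin n) ℂ → Matrix (Fin n) (Fin n) ℂ)
    (hKf : ∀ (A : Matrix (Fin n) (Fin n) ℂ) (j k : Fin n),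
      Kf A j k = ((p k * f (p j / p k) : ℝ) : ℂ) * A j k)
    (hTf : ∀ (A : Matrix (Fin n) (Fin n) ℂ) (j k : Fin n),
      Tf A j k = A j k / ((p k * f (p j / p k) : ℝ) : ℂ))
    (ω : Matrix (Fin n) (Fin n) ℂ) (hω : ω.IsHermitian)
    (Y : Matrix (Fin n) (Fin n) ℂ)
    (hYdef : Y = Kf ω - (Kf ω).trace • Matrix.diagonal (fun j => (p j : ℂ))) :
    Y.IsHermitian ∧ Y.trace = 0 ∧
    (∀ a : Matrix (Fin n) (Fin n) ℂ, a.IsHermitian → a.trace = 0 →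
      (a * Tf Y).trace = (a * ω).trace) := by
  set W : Matrix (Fin n) (Fin n) ℂ := (petzWeight p f).map (↑)
  have hW : W.IsHermitian :=
    (isHermitian_iff_isSymm.mpr (petzWeight_isSymm hp hfsymm)).map _
      fun x => (Complex.conj_ofReal x).symm
  have hK : Kf ω = W ⊙ ω := by ext j k; simp [hKf, W]
  have hρ : diagonal (fun j => (p j : ℂ)) = diagonal W.diag :=
    congrArg diagonal <| funext fun j =>
      congrArg Complex.ofReal (petzWeight_apply_self hf1 (hp j).ne').symm
  have hρherm : (diagonal fun j => (p j : ℂ)).IsHermitian :=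
    isHermitian_diagonal_of_self_adjoint _ (funext fun j => Complex.conj_ofReal (p j))
  have hTfY : Tf Y = ω - (Kf ω).trace • 1 := by
    ext j k
    rw [hTf, hYdef, hK, hρ]
    exact hadamard_sub_smul_diagonal_diag_apply_div
      (fun j k => Complex.ofReal_ne_zero.mpr (petzWeight_ne_zero hp hfpos j k)) ω _ j k
  refine ⟨hYdef ▸ (hK ▸ hW.hadamard hω).sub_trace_smul hρherm, ?_, ?_⟩
  · rw [hYdef]
    refine trace_sub_trace_smul_eq_zero ?_
    rw [trace_diagonal, ← Complex.ofReal_sum, hpsum, Complex.ofReal_one]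
  · intro a _ ha
    rw [hTfY, trace_mul_sub_smul_one _ ha]

/-- At a diagonal state `ρ = diag(p)`, for a traceless Hermitian `ω`, the matrix
`Y = K^f_ρ(ω) − Tr(K^f_ρ(ω)) ρ` is traceless Hermitian and satisfies
`Tr(a ⬝ T^f_ρ(Y)) = Tr(a ω)` for every traceless Hermitian `a`: `Y` is the `G_f`-gradient at
`ρ` of the expectation-value function `ρ ↦ Tr(ρ ω)`. -/
theorem gf_gradient_of_expectation_function {n : ℕ}
    (p : Fin n → ℝ) (hp : ∀ j, 0 < p j) (hpsum : ∑ j, p j = 1)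
    (f : ℝ → ℝ) (hfpos : ∀ x : ℝ, 0 < x → 0 < f x) (hf1 : f 1 = 1)
    (hfsymm : ∀ x : ℝ, 0 < x → f x = x * f x⁻¹)
    (Kf Tf : Matrix (Fin n) (Fin n) ℂ → Matrix (Fin n) (Fin n) ℂ)
    (hKf : ∀ (A : Matrix (Fin n) (Fin n) ℂ) (j k : Fin n),
      Kf A j k = ((p k * f (p j / p k) : ℝ) : ℂ) * A j k)
    (hTf : ∀ (A : Matrix (Fin n) (Fin n) ℂ) (j k : Fin n),
      Tf A j k = A j k / ((p k * f (p j / p k) : ℝ) : ℂ))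
    (ω : Matrix (Fin n) (Fin n) ℂ) (hω : ω.IsHermitian) (hωtr : ω.trace = 0)
    (Y : Matrix (Fin n) (Fin n) ℂ)
    (hYdef : Y = Kf ω - (Kf ω).trace • Matrix.diagonal (fun j => (p j : ℂ))) :
    Y.IsHermitian ∧ Y.trace = 0 ∧
    (∀ a : Matrix (Fin n) (Fin n) ℂ, a.IsHermitian → a.trace = 0 →
      (a * Tf Y).trace = (a * ω).trace) :=
  gf_gradient_of_expectation_function_general p hp hpsum f hfpos hf1 hfsymm Kf Tf hKf hTf ω hω Y
    hYdef
end
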